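/- Let Y and Δ be positive semidefinite operators on a finite-dimensional complex Hilbert space with tr(Δ) < 1, and let π̃ be a density matrix with π̃ ≤ Y + Δ. Let T := Y^{1/2}·((Y+Δ)^{1/2})^{+}, where ((Y+Δ)^{1/2})^{+} denotes the Moore–Penrose pseudoinverse of (Y+Δ)^{1/2}, and set π := T·π̃·T† / tr[T†T·π̃]. Then π is a well-defined density matrix and ‖π̃ − π‖₁ ≤ √(8·tr(Δ)). -/

import Mathlib

open scoped BigOperators Kronecker ComplexOrder

noncomputable section

namespace EquivEnsembles

/-! ### Generic linear-algebraic notions -/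

variable {ι : Type*} [Fintype ι] [DecidableEq ι]

/-- The positive semidefinite square root, as `Matrix.PosSemidef.sqrt` was defined in
Mathlib of December 2024 (removed since). -/
def _root_.Matrix.PosSemidef.sqrt {A : Matrix ι ι ℂ} (hA : A.PosSemidef) : Matrix ι ι ℂ :=
  (hA.isHermitian.eigenvectorUnitary : Matrix ι ι ℂ) *
    Matrix.diagonal ((↑) ∘ Real.sqrt ∘ hA.isHermitian.eigenvalues) *
    (star hA.isHermitian.eigenvectorUnitary : Matrix ι ι ℂ)

/-- The operator norm of a matrix, via its action on Euclidean space. -/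
def opNorm (A : Matrix ι ι ℂ) : ℝ := ‖Matrix.toEuclideanCLM (𝕜 := ℂ) A‖

/-- The trace norm `‖A‖₁ = tr √(AᴴA)` of a matrix. -/
def traceNorm (A : Matrix ι ι ℂ) : ℝ :=
  ((Matrix.posSemidef_conjTranspose_mul_self A).sqrt).trace.re

/-- A density matrix: positive semidefinite with unit trace. -/
def IsDensity (ρ : Matrix ι ι ℂ) : Prop := ρ.PosSemidef ∧ ρ.trace = 1

/-- Functional calculus for (Hermitian) matrices, via the spectral theorem;
junk value `0` on non-Hermitian matrices. -/
def mfun (f : ℝ → ℝ) (A : Matrix ι ι ℂ) : Matrix ι ι ℂ :=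
  if h : A.IsHermitian then
    (h.eigenvectorUnitary : Matrix ι ι ℂ) *
      Matrix.diagonal (fun i => (f (h.eigenvalues i) : ℂ)) *
      (star h.eigenvectorUnitary : Matrix ι ι ℂ)
  else 0

/-- Matrix logarithm, base 2. -/
def mlog2 (A : Matrix ι ι ℂ) : Matrix ι ι ℂ := mfun (Real.logb 2) A

/-- Matrix logarithm, base e. -/
def mln (A : Matrix ι ι ℂ) : Matrix ι ι ℂ := mfun Real.log A

/-- Moore-Penrose pseudoinverse (of a Hermitian matrix; junk value `0` otherwise). -/
def hpinv (A : Matrix ι ι ℂ) : Matrix ι ι ℂ := mfun (fun x => x⁻¹) A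

/-- Quantum relative entropy `S(τ‖ρ) = tr (τ (log τ − log ρ))` (base-2 logarithms). -/
def relEnt (τ ρ : Matrix ι ι ℂ) : ℝ := (τ * (mlog2 τ - mlog2 ρ)).trace.re

/-- Von Neumann entropy (base-2 logarithm). -/
def vnEnt (τ : Matrix ι ι ℂ) : ℝ := -(τ * mlog2 τ).trace.re

/-- Von Neumann entropy (natural logarithm). -/
def vnEntNat (τ : Matrix ι ι ℂ) : ℝ := -(τ * mln τ).trace.re

/-- Max-relative entropy `S_max(τ‖ρ) = min {λ : τ ≤ 2^λ ρ}`. -/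
def smax (τ ρ : Matrix ι ι ℂ) : ℝ :=
  sInf {lam : ℝ | (((2:ℝ) ^ lam) • ρ - τ).PosSemidef}

/-- The Gibbs state `e^{-H/T}/Z(T)` of a Hamiltonian `H` at temperature `T`. -/
def gibbs (H : Matrix ι ι ℂ) (T : ℝ) : Matrix ι ι ℂ :=
  ((NormedSpace.exp ((-(T : ℂ))⁻¹ • H)).trace)⁻¹ • NormedSpace.exp ((-(T : ℂ))⁻¹ • H)

/-- The partition function `Z(T) = tr e^{-H/T}`. -/
def partZ (H : Matrix ι ι ℂ) (T : ℝ) : ℂ := (NormedSpace.exp ((-(T : ℂ))⁻¹ • H)).trace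

/-- Energy density `u(T)` (with `N` sites). -/
def uT (H : Matrix ι ι ℂ) (T : ℝ) (N : ℕ) : ℝ := (H * gibbs H T).trace.re / N

/-- Specific heat capacity `c(T)` (with `N` sites). -/
def cT (H : Matrix ι ι ℂ) (T : ℝ) (N : ℕ) : ℝ :=
  ((H * H * gibbs H T).trace.re - ((H * gibbs H T).trace.re) ^ 2) / (N * T ^ 2)

/-- Entropy density `s(T)` (with `N` sites, natural logarithm). -/
def sT (H : Matrix ι ι ℂ) (T : ℝ) (N : ℕ) : ℝ := vnEntNat (gibbs H T) / N

/-- The rank-one spectral projection `|ν⟩⟨ν|` onto the `ν`-th eigenvector of a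
Hermitian matrix. -/
def eigProj {A : Matrix ι ι ℂ} (hA : A.IsHermitian) (ν : ι) : Matrix ι ι ℂ :=
  (hA.eigenvectorUnitary : Matrix ι ι ℂ) * Matrix.single ν ν 1 *
    (star hA.eigenvectorUnitary : Matrix ι ι ℂ)

/-- The microcanonical index set `M_{e,δ} = {ν : |E_ν − eN| ≤ δ√N}`. -/
def microSet {A : Matrix ι ι ℂ} (hA : A.IsHermitian) (e δ : ℝ) (N : ℕ) : Finset ι :=
  Finset.univ.filter fun ν => |hA.eigenvalues ν - e * N| ≤ δ * Real.sqrt N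

/-- The microcanonical state `τ_{e,δ}`. -/
def microState {A : Matrix ι ι ℂ} (hA : A.IsHermitian) (e δ : ℝ) (N : ℕ) : Matrix ι ι ℂ :=
  (((microSet hA e δ N).card : ℂ))⁻¹ • ∑ ν ∈ microSet hA e δ N, eigProj hA ν

/-- The restricted partition function `Z(T,e,δ) = Σ_{ν ∈ M_{e,δ}} e^{−E_ν/T}`. -/
def partZmicro {A : Matrix ι ι ℂ} (hA : A.IsHermitian) (T e δ : ℝ) (N : ℕ) : ℝ :=
  ∑ ν ∈ microSet hA e δ N, Real.exp (-(hA.eigenvalues ν) / T)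

/-- `τ` is supported on the span of the eigenvectors indexed by `M`. -/
def SupportedOn {A : Matrix ι ι ℂ} (hA : A.IsHermitian) (M : Finset ι)
    (τ : Matrix ι ι ℂ) : Prop :=
  (∑ ν ∈ M, eigProj hA ν) * τ * (∑ ν ∈ M, eigProj hA ν) = τ


/-! ### Many-body systems on a set `V` of sites -/

variable {V : Type*} [Fintype V] [DecidableEq V] {D : ℕ}

/-- Basis configurations of `⊗_{v ∈ V} ℂ^D`. -/
abbrev Cfg (V : Type*) (D : ℕ) := V → Fin D

/-- Basis configurations on a region `X ⊆ V`. -/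
abbrev CfgOn (D : ℕ) {V : Type*} (X : Finset V) := {x : V // x ∈ X} → Fin D

/-- Splitting a configuration into its parts on `X` and on the complement of `X`. -/
def cfgSplit (D : ℕ) (X : Finset V) :
    Cfg V D ≃ ({x : V // x ∈ X} → Fin D) × ({x : V // ¬ x ∈ X} → Fin D) :=
  Equiv.piEquivPiSubtypeProd (fun x => x ∈ X) fun _ => Fin D

/-- The reduced state `ρ_X = tr_{V∖X} ρ` on the region `X`. -/
def reduce (X : Finset V) (ρ : Matrix (Cfg V D) (Cfg V D) ℂ) :
    Matrix (CfgOn D X) (CfgOn D X) ℂ := fun a b =>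
  ∑ h : {x : V // ¬ x ∈ X} → Fin D,
    ρ ((cfgSplit D X).symm (a, h)) ((cfgSplit D X).symm (b, h))

/-- The embedding `P ↦ P ⊗ 𝟙` of an operator on region `X` into the full system. -/
def embed (X : Finset V) (P : Matrix (CfgOn D X) (CfgOn D X) ℂ) :
    Matrix (Cfg V D) (Cfg V D) ℂ :=
  Matrix.submatrix (P ⊗ₖ (1 : Matrix ({x : V // ¬ x ∈ X} → Fin D) ({x : V // ¬ x ∈ X} → Fin D) ℂ))
    (cfgSplit D X) (cfgSplit D X)

/-- An operator acts only on the region `X` if it is of the form `P ⊗ 𝟙`. -/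
def ActsOn (A : Matrix (Cfg V D) (Cfg V D) ℂ) (X : Finset V) : Prop :=
  ∃ P, A = embed X P

/-- The correlation
`cor_ρ(X,Y) = max |tr((P⊗Q)(ρ_{XY} − ρ_X ⊗ ρ_Y))|` over `‖P‖,‖Q‖ ≤ 1` supported on
`X` resp. `Y`; expressed via operators embedded in the full system (for disjoint
`X`, `Y`, `tr((P⊗Q)ρ_{XY}) = tr(P̂ Q̂ ρ)` and `tr((P⊗Q)(ρ_X⊗ρ_Y)) = tr(P̂ρ) tr(Q̂ρ)`). -/
def corr (ρ : Matrix (Cfg V D) (Cfg V D) ℂ) (X Y : Finset V) : ℝ :=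
  sSup {r : ℝ | ∃ (P : Matrix (CfgOn D X) (CfgOn D X) ℂ) (Q : Matrix (CfgOn D Y) (CfgOn D Y) ℂ),
    opNorm P ≤ 1 ∧ opNorm Q ≤ 1 ∧
    r = ‖(embed X P * embed Y Q * ρ).trace -
          (embed X P * ρ).trace * (embed Y Q * ρ).trace‖}

/-- The product state `⊗_{v ∈ V} ρ_v` of single-site states. -/
def prodState (ρs : V → Matrix (Fin D) (Fin D) ℂ) : Matrix (Cfg V D) (Cfg V D) ℂ :=
  fun f g => ∏ v, ρs v (f v) (g v)

/-- The single-site reduced state `ρ_{\{v\}}` as a `D×D` matrix. -/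
def reduce1 (v : V) (ρ : Matrix (Cfg V D) (Cfg V D) ℂ) : Matrix (Fin D) (Fin D) ℂ :=
  fun a b => ∑ h : {x : V // x ≠ v} → Fin D,
    ρ (fun x => if hx : x = v then a else h ⟨x, hx⟩)
      (fun x => if hx : x = v then b else h ⟨x, hx⟩)

/-- The tensor product `⊗_j ρ_j` of states on pairwise disjoint regions `C j`,
as a state on the union of the regions. -/
def tensorOver {M : ℕ} (C : Fin M → Finset V)
    (ρs : ∀ j, Matrix (CfgOn D (C j)) (CfgOn D (C j)) ℂ) :
    Matrix (CfgOn D (Finset.univ.biUnion C)) (CfgOn D (Finset.univ.biUnion C)) ℂ :=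
  fun f g => ∏ j, ρs j
    (fun x => f ⟨x.1, Finset.mem_biUnion.mpr ⟨j, Finset.mem_univ j, x.2⟩⟩)
    (fun x => g ⟨x.1, Finset.mem_biUnion.mpr ⟨j, Finset.mem_univ j, x.2⟩⟩)


/-! ### The lattice `Λ = {1,…,n}^d` -/

/-- A site of the lattice `Λ = {1,…,n}^d`. -/
abbrev Site (d n : ℕ) := Fin d → Fin n

/-- Manhattan distance between two lattice sites. -/
def siteDist {d n : ℕ} (x y : Site d n) : ℕ := ∑ a, ((x a : ℤ) - (y a : ℤ)).natAbs

/-- Distance between two regions of the lattice. -/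
def setDist {d n : ℕ} (X Y : Finset (Site d n)) : ℕ :=
  sInf {m | ∃ x ∈ X, ∃ y ∈ Y, siteDist x y = m}

/-- The ball of radius `k` around site `i` (in Manhattan distance). -/
def ball {d n : ℕ} (i : Site d n) (k : ℕ) : Finset (Site d n) :=
  Finset.univ.filter fun j => siteDist i j ≤ k

/-- The hypercube with edge length `l` and corner `c`. -/
def cube {d n : ℕ} (l : ℕ) (c : Fin d → Fin (n - l + 1)) : Finset (Site d n) :=
  Finset.univ.filter fun x => ∀ a, (c a : ℕ) ≤ (x a : ℕ) ∧ (x a : ℕ) < (c a : ℕ) + l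

/-- The uniform average over all hypercubes of edge length `l` contained in the lattice. -/
def cubeAvg {d n : ℕ} (l : ℕ) (f : Finset (Site d n) → ℝ) : ℝ :=
  (∑ c : Fin d → Fin (n - l + 1), f (cube l c)) / ((n - l + 1) ^ d : ℕ)


/-- The nonnegative real branch of the Lambert `W` function: for `x ≥ 0`,
`W x` is the unique `w ≥ 0` with `w e^w = x`. -/
def lambertW (x : ℝ) : ℝ := sSup {w : ℝ | 0 ≤ w ∧ w * Real.exp w ≤ x}

/-- The quantity `Δ_{k,ξ,z,T}` (with `C` the dimension-dependent constant, `c = c(T)`). -/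
def DeltaBE (C : ℝ) (d k : ℕ) (ξ z T c : ℝ) (N : ℕ) : ℝ :=
  C * (max (k : ℝ) ξ * (z + 1)) ^ (2 * d) / Real.sqrt (T ^ 2 * c) *
    max (1 / (max (k : ℝ) ξ * (z + 1) * Real.log N)) (1 / (T ^ 2 * c))


/-! ### Local Hamiltonians and decaying correlations on the lattice -/

variable {d n D : ℕ}

/-- The state `ρ` has `(ξ,z)`-exponentially decaying correlations. -/
def HasDecay (ρ : Matrix (Cfg (Site d n) D) (Cfg (Site d n) D) ℂ) (ξ z : ℝ) : Prop :=
  ∀ X Y : Finset (Site d n), 0 < setDist X Y →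
    corr ρ X Y ≤ ((n ^ d : ℕ) : ℝ) ^ z * Real.exp (-(setDist X Y : ℝ) / ξ)

/-- The family `Hloc` of local terms is a `k`-local Hamiltonian: each term has norm
at most one and acts only on sites at distance at most `k` from its center. -/
def IsKLocal (Hloc : Site d n → Matrix (Cfg (Site d n) D) (Cfg (Site d n) D) ℂ)
    (k : ℕ) : Prop :=
  ∀ i, opNorm (Hloc i) ≤ 1 ∧ ActsOn (Hloc i) (ball i k)


/-! ### Miscellaneous -/

/-- Reduction of a state on a dependent tensor product `⊗_j H_{A_j}` to the `j`-th factor. -/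
def reduceAt {M : ℕ} {ι : Fin M → Type*} [∀ j, Fintype (ι j)] [∀ j, DecidableEq (ι j)]
    (j : Fin M) (π : Matrix (∀ i, ι i) (∀ i, ι i) ℂ) : Matrix (ι j) (ι j) ℂ :=
  fun a b => ∑ f : ∀ i, ι i, ∑ g : ∀ i, ι i,
    if f j = a ∧ g j = b ∧ ∀ i, i ≠ j → f i = g i then π f g else 0

/-- The tensor product `ρ₁ ⊗ ⋯ ⊗ ρ_M` on a dependent tensor product `⊗_j H_{A_j}`. -/
def prodDep {M : ℕ} {ι : Fin M → Type*} [∀ j, Fintype (ι j)] [∀ j, DecidableEq (ι j)]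
    (ρs : ∀ j, Matrix (ι j) (ι j) ℂ) : Matrix (∀ i, ι i) (∀ i, ι i) ℂ :=
  fun f g => ∏ j, ρs j (f j) (g j)

/-- The pure state `|ψ⟩⟨ψ|` where `ψ = Σ_{ν ∈ M} c_ν |ν⟩` is the vector of the span of
the eigenvectors `{|ν⟩ : ν ∈ M}` with coordinate vector `c`. -/
def pureFromCoords {ι : Type*} [Fintype ι] [DecidableEq ι] {A : Matrix ι ι ℂ}
    (hA : A.IsHermitian) (M : Finset ι) (c : EuclideanSpace ℂ {ν // ν ∈ M}) :
    Matrix ι ι ℂ :=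
  Matrix.vecMulVec
    (fun x => ∑ ν : {ν // ν ∈ M}, c ν * (hA.eigenvectorUnitary : Matrix ι ι ℂ) x ν.1)
    (fun y => starRingEnd ℂ
      (∑ ν : {ν // ν ∈ M}, c ν * (hA.eigenvectorUnitary : Matrix ι ι ℂ) y ν.1))

/-!
Write `R = √(Y + Δ)`, `K = √Y` and `A = R⁺ π̃ R⁺`. Since `π̃ ≤ R²`, the support of `π̃` lies
in that of `R`, so `π̃ = R A R` and `0 ≤ A ≤ 1`, while `T π̃ T† = K A K`. The square root is
operator monotone, so `D = R - K ≥ 0`, and then `tr D² ≤ tr (R² - K²) = tr Δ =: ε`. Testing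
`R A R - K A K = D A R + K A D` against a unitary, Cauchy–Schwarz for the Hilbert–Schmidt
inner product bounds each term by `√ε`; renormalising by `c = tr (K A K) ∈ [1 - ε, 1]` costs
`1 - c ≤ ε`. The trace norm of a Hermitian matrix is attained by its sign unitary, so
`‖π̃ - π‖₁ ≤ min (2, 2√ε + ε) ≤ √(8ε)`.
-/

-- `Matrix.Norms.L2Operator` makes square matrices a C⋆-algebra, as `CFC.sqrt_le_sqrt` requires.
open scoped MatrixOrder Matrix.Norms.L2Operator
open Matrix

section Trace

variable {ι : Type*} [Fintype ι]

lemma norm_trace_conjTranspose_mul_le {m n : Type*} [Fintype m] [Fintype n]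
    (B C : Matrix m n ℂ) :
    ‖(Bᴴ * C).trace‖ ≤ √(Bᴴ * B).trace.re * √(Cᴴ * C).trace.re := by
  have hinner (X Z : Matrix m n ℂ) :
      inner ℂ (WithLp.toLp 2 X.vec) (WithLp.toLp 2 Z.vec) = (Xᴴ * Z).trace := by
    rw [EuclideanSpace.inner_toLp_toLp, dotProduct_comm, star_vec_dotProduct_vec]
  have hnorm (X : Matrix m n ℂ) : ‖WithLp.toLp 2 X.vec‖ = √(Xᴴ * X).trace.re := by
    rw [← hinner, inner_self_eq_norm_sq_to_K]
    simp [← Complex.ofReal_pow]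
  simpa only [hinner, hnorm] using
    norm_inner_le_norm (𝕜 := ℂ) (WithLp.toLp 2 B.vec) (WithLp.toLp 2 C.vec)

lemma _root_.Matrix.PosSemidef.re_trace_nonneg {A : Matrix ι ι ℂ} (hA : A.PosSemidef) :
    0 ≤ A.trace.re :=
  (Complex.nonneg_iff.1 hA.trace_nonneg).1

lemma _root_.Matrix.PosSemidef.ofReal_re_trace {A : Matrix ι ι ℂ} (hA : A.PosSemidef) :
    (A.trace.re : ℂ) = A.trace :=
  Complex.ext rfl (Complex.nonneg_iff.1 hA.trace_nonneg).2

lemma _root_.Matrix.PosSemidef.norm_trace_mul_mul_le {A : Matrix ι ι ℂ} (hA : A.PosSemidef)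
    (X Z : Matrix ι ι ℂ) :
    ‖(X * A * Z).trace‖ ≤ √(X * A * Xᴴ).trace.re * √(Zᴴ * A * Z).trace.re := by
  classical
  obtain ⟨G, rfl⟩ := CStarAlgebra.nonneg_iff_eq_star_mul_self.mp hA.nonneg
  have h := norm_trace_conjTranspose_mul_le (G * Xᴴ) (G * Z)
  simp only [conjTranspose_mul, conjTranspose_conjTranspose, Matrix.mul_assoc] at h
  simpa only [star_eq_conjTranspose, Matrix.mul_assoc] using h

lemma _root_.Matrix.PosSemidef.mul_mul_of_isHermitian {A B : Matrix ι ι ℂ} (hA : A.PosSemidef)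
    (hB : B.IsHermitian) : (B * A * B).PosSemidef := by
  simpa only [hB.eq] using hA.conjTranspose_mul_mul_same B

lemma _root_.Matrix.PosSemidef.re_trace_mul_nonneg {A B : Matrix ι ι ℂ} (hA : A.PosSemidef)
    (hB : B.PosSemidef) : 0 ≤ (A * B).trace.re := by
  classical
  obtain ⟨G, rfl⟩ := CStarAlgebra.nonneg_iff_eq_star_mul_self.mp hA.nonneg
  rw [star_eq_conjTranspose, Matrix.mul_assoc, trace_mul_comm]
  simpa only [Matrix.mul_assoc] using (hB.mul_mul_conjTranspose_same G).re_trace_nonneg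

lemma re_trace_sub_mul_sub_le {R K : Matrix ι ι ℂ} (hK : K.PosSemidef)
    (hRK : (R - K).PosSemidef) :
    ((R - K) * (R - K)).trace.re ≤ (R * R - K * K).trace.re := by
  have h : R * R - K * K = (R - K) * (R - K) + ((R - K) * K + K * (R - K)) := by noncomm_ring
  rw [h, trace_add, trace_add, Complex.add_re, Complex.add_re]
  linarith [hRK.re_trace_mul_nonneg hK, hK.re_trace_mul_nonneg hRK]

lemma isDensity_trace_inv_smul {σ : Matrix ι ι ℂ} (hσ : σ.PosSemidef) (h : σ.trace ≠ 0) :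
    IsDensity (σ.trace⁻¹ • σ) :=
  ⟨hσ.smul (inv_nonneg.2 hσ.trace_nonneg), by rw [trace_smul, smul_eq_mul, inv_mul_cancel₀ h]⟩

variable [DecidableEq ι]

lemma trace_unitary_conj {W : Matrix ι ι ℂ} (hW : W ∈ unitary (Matrix ι ι ℂ))
    (X : Matrix ι ι ℂ) :
    (W * X * Wᴴ).trace = X.trace := by
  rw [trace_mul_cycle, ← star_eq_conjTranspose, Unitary.star_mul_self_of_mem hW, Matrix.one_mul]

lemma _root_.Matrix.PosSemidef.norm_trace_unitary_mul_mul_mul_le {A W X Z : Matrix ι ι ℂ}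
    (hA : A.PosSemidef) (hW : W ∈ unitary (Matrix ι ι ℂ)) (hX : X.IsHermitian)
    (hZ : Z.IsHermitian) :
    ‖(W * X * A * Z).trace‖ ≤ √(X * A * X).trace.re * √(Z * A * Z).trace.re := by
  have h := hA.norm_trace_mul_mul_le (W * X) Z
  have hconj : (W * X * A * (W * X)ᴴ).trace = (X * A * X).trace := by
    rw [conjTranspose_mul, hX.eq, ← trace_unitary_conj hW (X * A * X)]
    simp only [Matrix.mul_assoc]
  rwa [hconj, hZ.eq] at h

lemma _root_.Matrix.PosSemidef.norm_trace_unitary_mul_le {ρ W : Matrix ι ι ℂ}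
    (hρ : ρ.PosSemidef) (hW : W ∈ unitary (Matrix ι ι ℂ)) : ‖(W * ρ).trace‖ ≤ ρ.trace.re := by
  have h := hρ.norm_trace_unitary_mul_mul_mul_le hW isHermitian_one isHermitian_one
  simp only [Matrix.mul_one, Matrix.one_mul] at h
  rwa [Real.mul_self_sqrt hρ.re_trace_nonneg] at h

end Trace

section Sqrt

variable {ι : Type*} [Fintype ι] [DecidableEq ι] {A B : Matrix ι ι ℂ}

lemma _root_.Matrix.PosSemidef.sqrt_eq_cfcSqrt (hA : A.PosSemidef) : hA.sqrt = CFC.sqrt A := by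
  rw [CFC.sqrt_eq_real_sqrt A hA.nonneg, cfcₙ_eq_cfc, hA.isHermitian.cfc_eq, IsHermitian.cfc,
    Unitary.conjStarAlgAut_apply, PosSemidef.sqrt]
  rfl

lemma _root_.Matrix.PosSemidef.posSemidef_sqrt (hA : A.PosSemidef) : hA.sqrt.PosSemidef := by
  rw [hA.sqrt_eq_cfcSqrt]
  exact nonneg_iff_posSemidef.mp (CFC.sqrt_nonneg A)

lemma _root_.Matrix.PosSemidef.sqrt_mul_self (hA : A.PosSemidef) : hA.sqrt * hA.sqrt = A := by
  rw [hA.sqrt_eq_cfcSqrt]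
  exact CFC.sqrt_mul_sqrt_self A hA.nonneg

lemma _root_.Matrix.PosSemidef.sqrt_sub_sqrt (hA : A.PosSemidef) (hB : B.PosSemidef)
    (hAB : (B - A).PosSemidef) : (hB.sqrt - hA.sqrt).PosSemidef := by
  rw [hA.sqrt_eq_cfcSqrt, hB.sqrt_eq_cfcSqrt]
  exact CFC.sqrt_le_sqrt A B hAB

end Sqrt

section TraceNorm

variable {ι : Type*} [Fintype ι] [DecidableEq ι]

lemma traceNorm_eq_re_trace_abs (A : Matrix ι ι ℂ) : traceNorm A = (CFC.abs A).trace.re := by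
  rw [traceNorm, PosSemidef.sqrt_eq_cfcSqrt]
  rfl

lemma _root_.Matrix.IsHermitian.traceNorm_le {H : Matrix ι ι ℂ} (hH : H.IsHermitian) {b : ℝ}
    (h : ∀ W ∈ unitary (Matrix ι ι ℂ), (W * H).trace.re ≤ b) : traceNorm H ≤ b := by
  have hs : ContinuousOn (fun x : ℝ => if x < 0 then (-1 : ℝ) else 1) (spectrum ℝ H) :=
    H.finite_real_spectrum.continuousOn _
  have habs : cfc (fun x : ℝ => if x < 0 then (-1 : ℝ) else 1) H * H = CFC.abs H := by
    rw [CFC.abs_eq_cfc_norm H hH.isSelfAdjoint]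
    nth_rewrite 2 [← cfc_id' ℝ H]
    rw [← cfc_mul _ _ H]
    refine cfc_congr fun x _ => ?_
    split_ifs with hx
    · simp [abs_of_neg hx]
    · simp [abs_of_nonneg (not_lt.1 hx)]
  rw [traceNorm_eq_re_trace_abs, ← habs]
  refine h _ ((cfc_unitary_iff _ H hH.isSelfAdjoint hs).2 fun x _ => ?_)
  split_ifs <;> simp

lemma traceNorm_sub_le_two {ρ σ : Matrix ι ι ℂ} (hρ : IsDensity ρ) (hσ : IsDensity σ) :
    traceNorm (ρ - σ) ≤ 2 := by
  refine (hρ.1.isHermitian.sub hσ.1.isHermitian).traceNorm_le fun W hW => ?_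
  have h₁ := hρ.1.norm_trace_unitary_mul_le hW
  have h₂ := hσ.1.norm_trace_unitary_mul_le hW
  rw [hρ.2, Complex.one_re] at h₁
  rw [hσ.2, Complex.one_re] at h₂
  rw [Matrix.mul_sub, trace_sub, Complex.sub_re]
  linarith [Complex.re_le_norm (W * ρ).trace, (abs_le.1 (Complex.abs_re_le_norm (W * σ).trace)).1]

end TraceNorm

section Pinv

variable {ι : Type*} [Fintype ι] [DecidableEq ι] {R ρ S N : Matrix ι ι ℂ}

lemma mfun_eq_cfc (f : ℝ → ℝ) (hR : R.IsHermitian) : mfun f R = cfc f R := by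
  rw [hR.cfc_eq, IsHermitian.cfc, mfun, dif_pos hR, Unitary.conjStarAlgAut_apply]
  rfl

lemma isHermitian_hpinv (hR : R.IsHermitian) : (hpinv R).IsHermitian := by
  rw [hpinv, mfun_eq_cfc _ hR]
  exact cfc_predicate _ R

lemma _root_.Matrix.IsHermitian.hpinv_mul_comm (hR : R.IsHermitian) :
    hpinv R * R = R * hpinv R := by
  have h := cfc_commute_cfc (fun x : ℝ => x⁻¹) (fun x => x) R
  rwa [cfc_id' ℝ R, ← mfun_eq_cfc _ hR] at h

lemma _root_.Matrix.IsHermitian.mul_hpinv_mul_self (hR : R.IsHermitian) :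
    R * hpinv R * R = R := by
  have hinv : ContinuousOn (fun x : ℝ => x⁻¹) (spectrum ℝ R) :=
    R.finite_real_spectrum.continuousOn _
  calc R * hpinv R * R = cfc (fun x : ℝ => x * x⁻¹ * x) R := by
        rw [cfc_mul (fun x : ℝ => x * x⁻¹) (fun x => x) R, cfc_mul (fun x : ℝ => x) _ R,
          cfc_id' ℝ R, hpinv, mfun_eq_cfc _ hR]
    _ = cfc (fun x : ℝ => x) R := cfc_congr fun x _ => by
        rcases eq_or_ne x 0 with rfl | hx
        · simp
        · field_simp
    _ = R := cfc_id' ℝ R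

lemma _root_.Matrix.IsHermitian.isStarProjection_hpinv_mul (hR : R.IsHermitian) :
    IsStarProjection (hpinv R * R) where
  isIdempotentElem := by
    rw [IsIdempotentElem, Matrix.mul_assoc, ← Matrix.mul_assoc R, hR.mul_hpinv_mul_self]
  isSelfAdjoint := by
    rw [IsSelfAdjoint, star_eq_conjTranspose, conjTranspose_mul, hR.eq,
      (isHermitian_hpinv hR).eq, hR.hpinv_mul_comm]

lemma _root_.Matrix.PosSemidef.mul_eq_zero_of_le (hρ : ρ.PosSemidef) (hle : (S - ρ).PosSemidef)
    (hSN : S * N = 0) : ρ * N = 0 := by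
  refine ext_of_mulVec_single fun i => ?_
  set v := N *ᵥ Pi.single i 1
  have hSv : S *ᵥ v = 0 := by rw [mulVec_mulVec, hSN, zero_mulVec]
  have hq : star v ⬝ᵥ ρ *ᵥ v = 0 := by
    refine le_antisymm ?_ (hρ.dotProduct_mulVec_nonneg v)
    have := hle.dotProduct_mulVec_nonneg v
    rwa [sub_mulVec, hSv, zero_sub, dotProduct_neg, neg_nonneg] at this
  rw [← mulVec_mulVec, zero_mulVec, (hρ.dotProduct_mulVec_zero_iff v).1 hq]

lemma _root_.Matrix.IsHermitian.conj_hpinv_conj_of_le (hR : R.IsHermitian) (hρ : ρ.PosSemidef)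
    (hle : (R * R - ρ).PosSemidef) : R * (hpinv R * ρ * hpinv R) * R = ρ := by
  have hρP : ρ * (hpinv R * R) = ρ := by
    have h := hρ.mul_eq_zero_of_le hle (N := 1 - hpinv R * R) (by
      rw [Matrix.mul_sub, Matrix.mul_one, ← Matrix.mul_assoc, Matrix.mul_assoc R R,
        Matrix.mul_assoc R (R * hpinv R), hR.mul_hpinv_mul_self, sub_self])
    rwa [Matrix.mul_sub, Matrix.mul_one, sub_eq_zero, eq_comm] at h
  have hPρ : hpinv R * R * ρ = ρ := by
    simpa only [conjTranspose_mul, hR.eq, (isHermitian_hpinv hR).eq, hρ.isHermitian.eq,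
      hR.hpinv_mul_comm] using congrArg conjTranspose hρP
  calc R * (hpinv R * ρ * hpinv R) * R = (R * hpinv R * ρ) * (hpinv R * R) := by
        simp only [Matrix.mul_assoc]
    _ = ρ := by rw [← hR.hpinv_mul_comm, hPρ, hρP]

lemma _root_.Matrix.IsHermitian.one_sub_hpinv_conj_of_le (hR : R.IsHermitian)
    (hle : (R * R - ρ).PosSemidef) : (1 - hpinv R * ρ * hpinv R).PosSemidef := by
  have hP := hR.isStarProjection_hpinv_mul
  have hconj : hpinv R * (R * R - ρ) * hpinv R = hpinv R * R - hpinv R * ρ * hpinv R := by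
    rw [Matrix.mul_sub, Matrix.sub_mul, ← Matrix.mul_assoc, Matrix.mul_assoc (hpinv R * R),
      ← hR.hpinv_mul_comm, hP.isIdempotentElem.eq]
  have h := (nonneg_iff_posSemidef.1 hP.one_sub_nonneg).add
    (hle.mul_mul_of_isHermitian (isHermitian_hpinv hR))
  rwa [hconj, sub_add_sub_cancel] at h

end Pinv

lemma le_sqrt_eight_mul {t ε : ℝ} (hε : 0 ≤ ε) (h2 : t ≤ 2) (h : t ≤ 2 * √ε + ε) :
    t ≤ √(8 * ε) := by
  rcases le_or_gt ε (1 / 2) with hε2 | hε2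
  · have h8 : √(8 * ε) = 2 * √2 * √ε := by
      rw [Real.sqrt_mul (by norm_num), show (8 : ℝ) = 2 ^ 2 * 2 by norm_num,
        Real.sqrt_mul (by norm_num), Real.sqrt_sq (by norm_num)]
    have hs := Real.sq_sqrt hε
    have hr := Real.sq_sqrt (show (0 : ℝ) ≤ 2 by norm_num)
    have hr14 : 1.4 ≤ √2 := by nlinarith [Real.sqrt_nonneg 2]
    have hs34 : √ε ≤ 3 / 4 := by nlinarith [Real.sqrt_nonneg ε]
    rw [h8]
    nlinarith [Real.sqrt_nonneg ε]
  · exact h2.trans (Real.le_sqrt_of_sq_le (by linarith))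

section Estimate

variable {ι : Type*} [Fintype ι] [DecidableEq ι] {R K A W σ : Matrix ι ι ℂ}

lemma re_trace_conj_le_of_le_one {D : Matrix ι ι ℂ} (hA1 : (1 - A).PosSemidef)
    (hD : D.IsHermitian) : (D * A * D).trace.re ≤ (D * D).trace.re := by
  have h := (hA1.conjTranspose_mul_mul_same D).re_trace_nonneg
  rw [hD.eq, Matrix.mul_sub, Matrix.sub_mul, Matrix.mul_one, trace_sub, Complex.sub_re] at h
  linarith

lemma re_trace_unitary_mul_conj_sub_conj_le (hK : K.PosSemidef) (hRK : (R - K).PosSemidef)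
    (hA : A.PosSemidef) (hA1 : (1 - A).PosSemidef) (hW : W ∈ unitary (Matrix ι ι ℂ)) :
    (W * (R * A * R - K * A * K)).trace.re ≤
      √(R * R - K * K).trace.re * (√(R * A * R).trace.re + √(K * A * K).trace.re) := by
  set D := R - K with hD
  have hDH : D.IsHermitian := hRK.isHermitian
  have hRH : R.IsHermitian := by simpa [D] using hDH.add hK.isHermitian
  have hDAD : √(D * A * D).trace.re ≤ √(R * R - K * K).trace.re :=
    Real.sqrt_le_sqrt ((re_trace_conj_le_of_le_one hA1 hDH).trans (re_trace_sub_mul_sub_le hK hRK))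
  have h₁ : ‖(W * D * A * R).trace‖ ≤ √(R * R - K * K).trace.re * √(R * A * R).trace.re :=
    (hA.norm_trace_unitary_mul_mul_mul_le hW hDH hRH).trans (by gcongr)
  have h₂ : ‖(W * K * A * D).trace‖ ≤ √(K * A * K).trace.re * √(R * R - K * K).trace.re :=
    (hA.norm_trace_unitary_mul_mul_mul_le hW hK.isHermitian hDH).trans (by gcongr)
  have hsplit : W * (R * A * R - K * A * K) = W * D * A * R + W * K * A * D := by
    simp only [hD]; noncomm_ring
  rw [hsplit, trace_add, Complex.add_re]
  linarith [Complex.re_le_norm (W * D * A * R).trace, Complex.re_le_norm (W * K * A * D).trace]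

lemma re_trace_unitary_mul_sub_normalize_le (hσ : σ.PosSemidef)
    (hW : W ∈ unitary (Matrix ι ι ℂ)) (hc : 0 < σ.trace.re) (hc1 : σ.trace.re ≤ 1) :
    (W * (σ - σ.trace⁻¹ • σ)).trace.re ≤ 1 - σ.trace.re := by
  set c := σ.trace.re
  have hWσ := (abs_le.1 ((Complex.abs_re_le_norm _).trans (hσ.norm_trace_unitary_mul_le hW))).1
  have hexp : (W * (σ - σ.trace⁻¹ • σ)).trace.re = (1 - c⁻¹) * (W * σ).trace.re := by
    rw [← hσ.ofReal_re_trace, Matrix.mul_sub, Matrix.mul_smul, trace_sub, trace_smul,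
      smul_eq_mul, Complex.sub_re, ← Complex.ofReal_inv, Complex.re_ofReal_mul]
    ring
  have hinv : 1 ≤ c⁻¹ := one_le_inv_iff₀.2 ⟨hc, hc1⟩
  calc (W * (σ - σ.trace⁻¹ • σ)).trace.re = (1 - c⁻¹) * (W * σ).trace.re := hexp
    _ ≤ (1 - c⁻¹) * -c := mul_le_mul_of_nonpos_left hWσ (by linarith)
    _ = 1 - c := by field_simp; ring

theorem isDensity_and_traceNorm_conj_sub_normalize_le (hK : K.PosSemidef)
    (hRK : (R - K).PosSemidef) (hΔ : (R * R - K * K).PosSemidef) (hA : A.PosSemidef)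
    (hA1 : (1 - A).PosSemidef) (hρ1 : (R * A * R).trace = 1)
    (hε1 : (R * R - K * K).trace.re < 1) :
    IsDensity ((K * A * K).trace⁻¹ • (K * A * K)) ∧
      traceNorm (R * A * R - (K * A * K).trace⁻¹ • (K * A * K)) ≤
        √(8 * (R * R - K * K).trace.re) := by
  have hRH : R.IsHermitian := by simpa using hRK.isHermitian.add hK.isHermitian
  have hρ : IsDensity (R * A * R) := ⟨hA.mul_mul_of_isHermitian hRH, hρ1⟩
  have hσ := hA.mul_mul_of_isHermitian hK.isHermitian
  have hloss : 1 - (K * A * K).trace.re = (A * (R * R - K * K)).trace.re := by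
    rw [← Complex.one_re, ← hρ1, ← Complex.sub_re, ← trace_sub, Matrix.mul_sub, trace_sub,
      trace_sub, trace_mul_cycle, trace_mul_cycle K, trace_mul_comm (R * R),
      trace_mul_comm (K * K)]
  have hloss_le : (A * (R * R - K * K)).trace.re ≤ (R * R - K * K).trace.re := by
    have h := hA1.re_trace_mul_nonneg hΔ
    rwa [Matrix.sub_mul, Matrix.one_mul, trace_sub, Complex.sub_re, sub_nonneg] at h
  have hc1 : (K * A * K).trace.re ≤ 1 := by linarith [hA.re_trace_mul_nonneg hΔ]
  have hc0 : 0 < (K * A * K).trace.re := by linarith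
  have hπ := isDensity_trace_inv_smul hσ fun h => hc0.ne' (by simp [h])
  refine ⟨hπ, le_sqrt_eight_mul hΔ.re_trace_nonneg (traceNorm_sub_le_two hρ hπ) ?_⟩
  refine (hρ.1.isHermitian.sub hπ.1.isHermitian).traceNorm_le fun W hW => ?_
  have hconj := re_trace_unitary_mul_conj_sub_conj_le hK hRK hA hA1 hW
  have hnorm := re_trace_unitary_mul_sub_normalize_le hσ hW hc0 hc1
  rw [hρ1, Complex.one_re, Real.sqrt_one] at hconj
  have hsplit : W * (R * A * R - (K * A * K).trace⁻¹ • (K * A * K)) =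
      W * (R * A * R - K * A * K) + W * (K * A * K - (K * A * K).trace⁻¹ • (K * A * K)) := by
    rw [← Matrix.mul_add, sub_add_sub_cancel]
  rw [hsplit, trace_add, Complex.add_re]
  have hsqrt : √(K * A * K).trace.re ≤ 1 := Real.sqrt_le_one.2 hc1
  nlinarith [Real.sqrt_nonneg (R * R - K * K).trace.re]

end Estimate

open scoped Matrix

/-- second part of the proof of Lemma 5: the renormalized conjugated
state `π = T π̃ T† / tr(T†T π̃)` is a density matrix close to `π̃` in trace norm. -/
theorem statement_13 {ι : Type*} [Fintype ι] [DecidableEq ι]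
    (Y Δ πt : Matrix ι ι ℂ) (hY : Y.PosSemidef) (hΔ : Δ.PosSemidef)
    (hπt : IsDensity πt) (hle : (Y + Δ - πt).PosSemidef)
    (hΔ1 : Δ.trace.re < 1)
    (T π : Matrix ι ι ℂ) (hT : T = hY.sqrt * hpinv (hY.add hΔ).sqrt)
    (hπ : π = ((Tᴴ * T * πt).trace)⁻¹ • (T * πt * Tᴴ)) :
    IsDensity π ∧ traceNorm (πt - π) ≤ Real.sqrt (8 * Δ.trace.re) := by
  obtain ⟨hπt, hπt1⟩ := hπt
  have hR := (hY.add hΔ).posSemidef_sqrt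
  have hRR := (hY.add hΔ).sqrt_mul_self
  have hK := hY.posSemidef_sqrt
  have hKK := hY.sqrt_mul_self
  have hRK := hY.sqrt_sub_sqrt (hY.add hΔ) (by simpa using hΔ)
  generalize (hY.add hΔ).sqrt = R at *
  generalize hY.sqrt = K at *
  subst hT hπ
  obtain rfl : R * R - K * K = Δ := by rw [hRR, hKK, add_sub_cancel_left]
  rw [← hRR] at hle
  have hsupp := hR.isHermitian.conj_hpinv_conj_of_le hπt hle
  have hσ : K * hpinv R * πt * (K * hpinv R)ᴴ = K * (hpinv R * πt * hpinv R) * K := by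
    rw [conjTranspose_mul, hK.isHermitian.eq, (isHermitian_hpinv hR.isHermitian).eq]
    simp only [Matrix.mul_assoc]
  have htr : ((K * hpinv R)ᴴ * (K * hpinv R) * πt).trace =
      (K * hpinv R * πt * (K * hpinv R)ᴴ).trace := by
    rw [Matrix.mul_assoc, trace_mul_comm]
  have key := isDensity_and_traceNorm_conj_sub_normalize_le hK hRK hΔ
    (hπt.mul_mul_of_isHermitian (isHermitian_hpinv hR.isHermitian))
    (hR.isHermitian.one_sub_hpinv_conj_of_le hle) (by rw [hsupp, hπt1]) hΔ1
  rwa [hsupp, ← hσ, ← htr] at key
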